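/- Let ε > 0 and let a, b ≥ 0 be reals. Then |qual_ε(a + 1, b) − qual_ε(a, b)| ≤ f_ε(x*(ε)), where qual_ε(a, b) = min(a, b)·(1 − g_ε(|a − b|)) + max(a, b)·g_ε(|a − b|), g_ε(x) = (exp(−ε·x)/2)·(1 + ε·x/2), f_ε(x) = x·(g_ε(x − 1) − g_ε(x)) + (1 − g_ε(x − 1)), and x*(ε) = (ε·e^ε + sqrt(2 − (4 − ε²)·e^ε + 2·e^{2ε})) / (ε·e^ε − ε). That is, the global sensitivity of the per-cell grid quality function under addition of one tuple is at most B(ε) = f_ε(x*(ε)). -/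

import Mathlib

/-!
Write `φ(t) = t·g_ε(t)` and `ψ(x) = φ(x) − φ(x − 1)`. Then `qual_ε(a, b) = min(a, b) + φ(|a − b|)`
and `f_ε = 1 − ψ`, so with `d = |a − b|` adding a tuple changes the quality by `ψ(d + 1)` if
`b ≤ a`, by `1 − ψ(d)` if `a + 1 ≤ b`, and by an amount in `[0, 1]` otherwise. Since `|φ'| ≤ 1`
on `[0, ∞)`, `|ψ| ≤ 1` on `[1, ∞)`. The derivative `ψ'(x)` has the sign of a quadratic in `x`
whose larger root is `x*(ε)` and whose smaller root lies below `1`, so `ψ(x*(ε))` is the minimum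
of `ψ` on `[1, ∞)`; it is `≤ 0` because `ψ ≤ φ` there and `φ(x) → 0`. Hence every change lies
in `[−1, 1 − ψ(x*(ε))]`.
-/
open Real

/-- `g_ε(x) = (exp(−ε·x)/2)·(1 + ε·x/2)`. -/
noncomputable def gFn (ε x : ℝ) : ℝ := Real.exp (-ε * x) / 2 * (1 + ε * x / 2)

/-- Quality of a cell with `a` positive and `b` negative instances. -/
noncomputable def qualFn (ε a b : ℝ) : ℝ :=
  min a b * (1 - gFn ε |a - b|) + max a b * gFn ε |a - b|

/-- `f_ε(x) = x·(g_ε(x − 1) − g_ε(x)) + (1 − g_ε(x − 1))`. -/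
noncomputable def fFn (ε x : ℝ) : ℝ :=
  x * (gFn ε (x - 1) - gFn ε x) + (1 - gFn ε (x - 1))

/-- `x*(ε) = (ε·e^ε + sqrt(2 − (4 − ε²)·e^ε + 2·e^{2ε})) / (ε·e^ε − ε)`. -/
noncomputable def xstar (ε : ℝ) : ℝ :=
  (ε * Real.exp ε + Real.sqrt (2 - (4 - ε ^ 2) * Real.exp ε + 2 * Real.exp (2 * ε))) /
    (ε * Real.exp ε - ε)

open Filter Set Topology

noncomputable def phiFn (ε t : ℝ) : ℝ := t * gFn ε t

noncomputable def psiFn (ε x : ℝ) : ℝ := phiFn ε x - phiFn ε (x - 1)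

lemma qualFn_eq_min_add_phiFn (ε a b : ℝ) : qualFn ε a b = min a b + phiFn ε |a - b| := by
  rw [qualFn, phiFn]
  linear_combination gFn ε |a - b| * max_sub_min_eq_abs' a b

lemma fFn_eq_one_sub_psiFn (ε x : ℝ) : fFn ε x = 1 - psiFn ε x := by
  rw [fFn, psiFn, phiFn, phiFn]
  ring

section gFn

variable {ε t : ℝ}

lemma gFn_nonneg (hε : 0 ≤ ε) (ht : 0 ≤ t) : 0 ≤ gFn ε t := by
  unfold gFn
  have := mul_nonneg hε ht
  positivity

lemma gFn_le_half (hε : 0 ≤ ε) (ht : 0 ≤ t) : gFn ε t ≤ 1 / 2 := by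
  have hs := mul_nonneg hε ht
  have hexp : 1 + ε * t / 2 ≤ exp (ε * t) := by linarith [add_one_le_exp (ε * t)]
  have hinv : exp (-ε * t) * exp (ε * t) = 1 := by
    rw [← exp_add, neg_mul, neg_add_cancel, exp_zero]
  rw [gFn]
  nlinarith [exp_pos (-ε * t)]

end gFn

lemma abs_exp_neg_mul_two_sub_sq_le {s : ℝ} (hs : 0 ≤ s) :
    |exp (-s) * (2 - s ^ 2) / 4| ≤ 1 := by
  have hinv : exp (-s) * exp s = 1 := by rw [← exp_add, neg_add_cancel, exp_zero]
  have hsq : s ^ 2 ≤ 2 * exp s := by nlinarith [quadratic_le_exp_of_nonneg hs]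
  have hle : exp (-s) ≤ 1 := exp_le_one_iff.2 (by linarith)
  rw [abs_le]
  constructor <;> nlinarith [exp_pos (-s)]

lemma hasDerivAt_phiFn (ε t : ℝ) :
    HasDerivAt (phiFn ε) (exp (-ε * t) * (2 - ε ^ 2 * t ^ 2) / 4) t := by
  have hexp : HasDerivAt (fun x ↦ exp (-ε * x)) (exp (-ε * t) * -ε) t := by
    simpa using ((hasDerivAt_id t).const_mul (-ε)).exp
  have hlin : HasDerivAt (fun x ↦ 1 + ε * x / 2) (ε / 2) t := by
    simpa using (((hasDerivAt_id t).const_mul ε).div_const 2).const_add 1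
  refine ((hasDerivAt_id t).mul ((hexp.div_const 2).mul hlin)).congr_deriv ?_
  simp only [id, Pi.mul_apply]
  ring

lemma abs_phiFn_sub_le {ε x y : ℝ} (hε : 0 ≤ ε) (hx : 0 ≤ x) (hy : 0 ≤ y) :
    |phiFn ε x - phiFn ε y| ≤ |x - y| := by
  have h := Convex.norm_image_sub_le_of_norm_hasDerivWithin_le (C := 1)
    (fun t _ ↦ (hasDerivAt_phiFn ε t).hasDerivWithinAt)
    (fun t (ht : 0 ≤ t) ↦ by
      rw [Real.norm_eq_abs, neg_mul, ← mul_pow]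
      exact abs_exp_neg_mul_two_sub_sq_le (mul_nonneg hε ht))
    (convex_Ici 0) (mem_Ici.2 hy) (mem_Ici.2 hx)
  simpa [Real.norm_eq_abs] using h

lemma abs_psiFn_le_one {ε x : ℝ} (hε : 0 ≤ ε) (hx : 1 ≤ x) : |psiFn ε x| ≤ 1 := by
  simpa [psiFn] using abs_phiFn_sub_le hε (x := x) (y := x - 1) (by linarith) (by linarith)

lemma hasDerivAt_psiFn (ε x : ℝ) :
    HasDerivAt (psiFn ε)
      (exp (-ε * x) / 4 * ((2 - ε ^ 2 * x ^ 2) - exp ε * (2 - ε ^ 2 * (x - 1) ^ 2))) x := by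
  have hshift := (hasDerivAt_phiFn ε (x - 1)).comp x ((hasDerivAt_id x).sub_const 1)
  have hexp : exp (-ε * (x - 1)) = exp (-ε * x) * exp ε := by rw [← exp_add]; ring_nf
  refine ((hasDerivAt_phiFn ε x).sub hshift).congr_deriv ?_
  rw [hexp]
  ring

lemma tendsto_phiFn_atTop {ε : ℝ} (hε : 0 < ε) : Tendsto (phiFn ε) atTop (𝓝 0) := by
  have hs : Tendsto (fun t ↦ ε * t) atTop atTop := tendsto_id.const_mul_atTop hε
  have h₁ := (tendsto_pow_mul_exp_neg_atTop_nhds_zero 1).comp hs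
  have h₂ := (tendsto_pow_mul_exp_neg_atTop_nhds_zero 2).comp hs
  have h := (h₁.div_const (2 * ε)).add (h₂.div_const (4 * ε))
  rw [zero_div, zero_div, add_zero] at h
  refine h.congr fun t ↦ ?_
  simp only [Function.comp_apply, phiFn, gFn, neg_mul]
  field_simp
  ring

section cases

variable {ε a b : ℝ}

lemma qualFn_add_one_sub_of_le (h : b ≤ a) :
    qualFn ε (a + 1) b - qualFn ε a b = psiFn ε (a - b + 1) := by
  rw [qualFn_eq_min_add_phiFn, qualFn_eq_min_add_phiFn, min_eq_right (by linarith),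
    min_eq_right h, abs_of_nonneg (by linarith), abs_of_nonneg (by linarith), psiFn]
  ring_nf

lemma qualFn_add_one_sub_of_add_one_le (h : a + 1 ≤ b) :
    qualFn ε (a + 1) b - qualFn ε a b = 1 - psiFn ε (b - a) := by
  rw [qualFn_eq_min_add_phiFn, qualFn_eq_min_add_phiFn, min_eq_left h,
    min_eq_left (by linarith), abs_of_nonpos (by linarith), abs_of_nonpos (by linarith), psiFn]
  ring_nf

lemma abs_qualFn_add_one_sub_le_one (hε : 0 ≤ ε) (hab : a ≤ b) (hba : b ≤ a + 1) :
    |qualFn ε (a + 1) b - qualFn ε a b| ≤ 1 := by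
  rw [qualFn_eq_min_add_phiFn, qualFn_eq_min_add_phiFn, min_eq_right hba, min_eq_left hab,
    abs_of_nonneg (by linarith : 0 ≤ a + 1 - b), abs_of_nonpos (by linarith : a - b ≤ 0), phiFn,
    phiFn, abs_le]
  have hg₁ := gFn_nonneg hε (by linarith : 0 ≤ a + 1 - b)
  have hg₂ := gFn_le_half hε (by linarith : 0 ≤ a + 1 - b)
  have hg₃ := gFn_nonneg hε (by linarith : 0 ≤ -(a - b))
  have hg₄ := gFn_le_half hε (by linarith : 0 ≤ -(a - b))
  constructor <;> nlinarith

end cases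

lemma xstar_radicand_eq (ε : ℝ) :
    2 - (4 - ε ^ 2) * exp ε + 2 * exp (2 * ε) = 2 * (exp ε - 1) ^ 2 + ε ^ 2 * exp ε := by
  rw [two_mul ε, exp_add]
  ring

section xstar

variable {ε : ℝ}

lemma le_sqrt_xstar_radicand (hε : 0 ≤ ε) : ε ≤ √(2 - (4 - ε ^ 2) * exp ε + 2 * exp (2 * ε)) := by
  rw [le_sqrt hε (by rw [xstar_radicand_eq]; positivity), xstar_radicand_eq]
  nlinarith [sq_nonneg (exp ε - 1), one_le_exp hε]

lemma xstar_mul_eq (hε : 0 < ε) : xstar ε * (ε * (exp ε - 1))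
    = ε * exp ε + √(2 - (4 - ε ^ 2) * exp ε + 2 * exp (2 * ε)) := by
  have hk : ε * exp ε - ε ≠ 0 := by nlinarith [one_lt_exp_iff.2 hε]
  rw [xstar, mul_sub_one, div_mul_cancel₀ _ hk]

lemma one_lt_xstar (hε : 0 < ε) : 1 < xstar ε := by
  have hk : 0 < ε * (exp ε - 1) := mul_pos hε (by linarith [one_lt_exp_iff.2 hε])
  have hu := xstar_mul_eq hε
  nlinarith [sqrt_nonneg (2 - (4 - ε ^ 2) * exp ε + 2 * exp (2 * ε))]

lemma sub_xstar_mul_quadratic_nonneg (hε : 0 < ε) {x : ℝ} (hx : 1 ≤ x) :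
    0 ≤ (x - xstar ε) * ((2 - ε ^ 2 * x ^ 2) - exp ε * (2 - ε ^ 2 * (x - 1) ^ 2)) := by
  set s := √(2 - (4 - ε ^ 2) * exp ε + 2 * exp (2 * ε))
  set k := ε * (exp ε - 1)
  have hE : 0 < exp ε - 1 := by linarith [one_lt_exp_iff.2 hε]
  have hk₀ : 0 < k := mul_pos hε hE
  have hu := xstar_mul_eq hε
  have hsq : s ^ 2 = 2 - (4 - ε ^ 2) * exp ε + 2 * exp (2 * ε) :=
    sq_sqrt (by rw [xstar_radicand_eq]; positivity)
  have hexp : exp (2 * ε) = exp ε * exp ε := by rw [two_mul, exp_add]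
  -- `x*(ε)` is the larger root; the other factor is `≥ k - ε * exp ε + s = s - ε ≥ 0` for `x ≥ 1`.
  have hfactor : (exp ε - 1) * ((2 - ε ^ 2 * x ^ 2) - exp ε * (2 - ε ^ 2 * (x - 1) ^ 2))
      = k * (x - xstar ε) * (k * x - ε * exp ε + s) := by
    linear_combination hsq + 2 * hexp + (k * x - ε * exp ε + s) * hu
  have hlast : 0 ≤ k * x - ε * exp ε + s := by nlinarith [le_sqrt_xstar_radicand hε.le]
  refine nonneg_of_mul_nonneg_right (a := exp ε - 1) ?_ hE
  rw [mul_left_comm, hfactor]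
  nlinarith [mul_nonneg (mul_nonneg hk₀.le (sq_nonneg (x - xstar ε))) hlast]

end xstar

section psiFn

variable {ε : ℝ}

lemma antitoneOn_psiFn (hε : 0 < ε) : AntitoneOn (psiFn ε) (Icc 1 (xstar ε)) :=
  antitoneOn_of_hasDerivWithinAt_nonpos (convex_Icc _ _)
    (fun x _ ↦ (hasDerivAt_psiFn ε x).continuousAt.continuousWithinAt)
    (fun x _ ↦ (hasDerivAt_psiFn ε x).hasDerivWithinAt)
    (fun x hx ↦ by
      rw [interior_Icc] at hx
      exact mul_nonpos_of_nonneg_of_nonpos (by positivity) (nonpos_of_mul_nonneg_right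
        (sub_xstar_mul_quadratic_nonneg hε hx.1.le) (sub_neg.2 hx.2)))

lemma monotoneOn_psiFn (hε : 0 < ε) : MonotoneOn (psiFn ε) (Ici (xstar ε)) :=
  monotoneOn_of_hasDerivWithinAt_nonneg (convex_Ici _)
    (fun x _ ↦ (hasDerivAt_psiFn ε x).continuousAt.continuousWithinAt)
    (fun x _ ↦ (hasDerivAt_psiFn ε x).hasDerivWithinAt)
    (fun x hx ↦ by
      rw [interior_Ici, mem_Ioi] at hx
      exact mul_nonneg (by positivity) (nonneg_of_mul_nonneg_right
        (sub_xstar_mul_quadratic_nonneg hε (by linarith [one_lt_xstar hε])) (sub_pos.2 hx)))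

lemma psiFn_xstar_le (hε : 0 < ε) {x : ℝ} (hx : 1 ≤ x) : psiFn ε (xstar ε) ≤ psiFn ε x := by
  rcases le_total x (xstar ε) with h | h
  · exact antitoneOn_psiFn hε ⟨hx, h⟩ ⟨(one_lt_xstar hε).le, le_rfl⟩ h
  · exact monotoneOn_psiFn hε self_mem_Ici h h

lemma psiFn_xstar_nonpos (hε : 0 < ε) : psiFn ε (xstar ε) ≤ 0 := by
  refine ge_of_tendsto (tendsto_phiFn_atTop hε) (eventually_atTop.2 ⟨xstar ε, fun x hx ↦ ?_⟩)
  have hx₁ : 1 ≤ x := by linarith [one_lt_xstar hε]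
  have hφ : 0 ≤ phiFn ε (x - 1) := mul_nonneg (by linarith) (gFn_nonneg hε.le (by linarith))
  linarith [psiFn_xstar_le hε hx₁, show psiFn ε x = phiFn ε x - phiFn ε (x - 1) from rfl]

end psiFn

theorem qual_sensitivity_le_general (ε : ℝ) (hε : 0 < ε) (a b : ℝ) :
    |qualFn ε (a + 1) b - qualFn ε a b| ≤ fFn ε (xstar ε) := by
  have hψ := psiFn_xstar_nonpos hε
  rw [fFn_eq_one_sub_psiFn]
  rcases le_total b a with hba | hab
  · rw [qualFn_add_one_sub_of_le hba]
    linarith [abs_psiFn_le_one hε.le (by linarith : 1 ≤ a - b + 1)]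
  rcases le_total b (a + 1) with hb | hb
  · linarith [abs_qualFn_add_one_sub_le_one hε.le hab hb]
  · rw [qualFn_add_one_sub_of_add_one_le hb, abs_le]
    have hmin := psiFn_xstar_le hε (by linarith : 1 ≤ b - a)
    have hle := (abs_le.1 (abs_psiFn_le_one hε.le (by linarith : 1 ≤ b - a))).2
    constructor <;> linarith

/-- The global sensitivity of the per-cell grid quality function under addition of one
tuple is at most `B(ε) = f_ε(x*(ε))`. -/
theorem qual_sensitivity_le (ε : ℝ) (hε : 0 < ε) (a b : ℝ) (ha : 0 ≤ a) (hb : 0 ≤ b) :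
    |qualFn ε (a + 1) b - qualFn ε a b| ≤ fFn ε (xstar ε) :=
  qual_sensitivity_le_general ε hε a b
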